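/- Let v be an inner vertex of a branch decomposition T with children v1 and v2, let ν_x : D → ℝ for every x ∈ X, and for a vertex u and τ : X_u → D set ν_u(τ) := Σ_{x∈X_u} ν_x(τ(x)). Let (Φ,Ψ) be a shape for v with X̂_v(Φ,Ψ) nonempty, and let P denote the set of pairs of shapes ((Φ1,Ψ1),(Φ2,Ψ2)) for v1, v2 such that (Φ,Ψ), (Φ1,Ψ1), (Φ2,Ψ2) are linked and both X̂_{v1}(Φ1,Ψ1) and X̂_{v2}(Φ2,Ψ2) are nonempty. Then max{ ν_v(τ) : τ ∈ X̂_v(Φ,Ψ) } = max over ((Φ1,Ψ1),(Φ2,Ψ2)) ∈ P of ( max{ ν_{v1}(τ1) : τ1 ∈ X̂_{v1}(Φ1,Ψ1) } + max{ ν_{v2}(τ2) : τ2 ∈ X̂_{v2}(Φ2,Ψ2) } ). -/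

import Mathlib

open Finset

/-- A (translated) separable system with variable type `V`, constraint type `C` and
finite domain `D`.  The constraint set is `C = Cin ∪ Cge` (disjointly), where `Cin`
is the set of constraints of type `∈` (with target set `Γ c` whose largest element
is the threshold `γ c`) and `Cge` is the set of constraints of type `≥` (with
threshold `γ c`).  Every constraint `c` has nonnegative summands `g c x : D → ℕ`. -/
structure SepSystem (V C D : Type) where
  /-- the summand functions `g^c_x : D → ℤ≥0` -/
  g : C → V → D → ℕ
  /-- the thresholds `γ^c` -/
  γ : C → ℕ
  /-- the target sets `Γ^c` for constraints in `C^∈` -/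
  Γ : C → Finset ℕ
  /-- the set of constraints of type `∈` -/
  Cin : Finset C
  /-- the set of constraints of type `≥` -/
  Cge : Finset C
  /-- `C^∈` and `C^≥` are disjoint -/
  disj : Disjoint Cin Cge
  /-- every constraint is in `C^∈ ∪ C^≥` -/
  cover : ∀ c, c ∈ Cin ∨ c ∈ Cge
  /-- for `c ∈ C^∈`, `γ^c` belongs to `Γ^c` … -/
  gammaMem : ∀ c ∈ Cin, γ c ∈ Γ c
  /-- … and is its largest element -/
  gammaMax : ∀ c ∈ Cin, ∀ a ∈ Γ c, a ≤ γ c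

namespace SepSystem

variable {V C D : Type} [DecidableEq V] [DecidableEq C] [Fintype V] [Fintype C]

/-- The constraint bound `cb^c(τ)` of the assignment `τ` restricted to `X'`. -/
def cb (S : SepSystem V C D) (X' : Finset V) (τ : V → D) (c : C) : ℕ :=
  ∑ x ∈ X', S.g c x (τ x)

/-- The map `C'/τ` (for `τ` restricted to `X'`), encoded as the function `C → ℕ`
that vanishes outside `C'`. -/
def cdiv (S : SepSystem V C D) (C' : Finset C) (X' : Finset V) (τ : V → D) : C → ℕ :=
  fun c => if c ∈ C' then min (S.cb X' τ c) (S.γ c) else 0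

/-- The projection `proj(C', X') = { C'/τ : τ : X' → D }`. -/
def proj (S : SepSystem V C D) (C' : Finset C) (X' : Finset V) : Set (C → ℕ) :=
  { f | ∃ τ : V → D, f = S.cdiv C' X' τ }

end SepSystem
namespace SepSystem

variable {V C D : Type} [DecidableEq V] [DecidableEq C] [Fintype V] [Fintype C]

/-- `τ` (restricted to `X_v`) has shape `(Φ, Ψ)` at a vertex `v` with variables `Xv`
and constraints `Cv`: conditions (S1), (S1*), (S2∈), (S2≥). -/
def HasShape (S : SepSystem V C D) (Xv : Finset V) (Cv : Finset C)
    (Φ Ψ : C → ℕ) (τ : V → D) : Prop :=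
  (∀ c ∈ Cvᶜ, Φ c = min (S.cb Xv τ c) (S.γ c)) ∧
  (∀ c ∈ Cvᶜ ∩ S.Cin, S.cb Xv τ c ≤ S.γ c) ∧
  (∀ c ∈ Cv ∩ S.Cin, Ψ c + S.cb Xv τ c ∈ S.Γ c) ∧
  (∀ c ∈ Cv ∩ S.Cge, S.γ c ≤ Ψ c + S.cb Xv τ c)

end SepSystem
namespace SepSystem

variable {V C D : Type} [DecidableEq V] [DecidableEq C] [Fintype V] [Fintype C]

/-- `(Φ,Ψ)`, `(Φ1,Ψ1)`, `(Φ2,Ψ2)` are linked shapes for an inner vertex `v`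
(variables `Xv1 ∪ Xv2`, constraints `Cv1 ∪ Cv2`) with children `v1` and `v2`:
they are shapes, they satisfy (L1*), (L2*), (L3*) and the equations (L1), (L2), (L3). -/
def Linked (S : SepSystem V C D) (Xv1 Xv2 : Finset V) (Cv1 Cv2 : Finset C)
    (Φ Ψ Φ1 Ψ1 Φ2 Ψ2 : C → ℕ) : Prop :=
  Ψ ∈ S.proj (Cv1 ∪ Cv2) (Xv1 ∪ Xv2)ᶜ ∧
  Φ1 ∈ S.proj Cv1ᶜ Xv1 ∧
  Φ2 ∈ S.proj Cv2ᶜ Xv2 ∧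
  Φ ∈ S.proj (Cv1 ∪ Cv2)ᶜ (Xv1 ∪ Xv2) ∧
  Ψ1 ∈ S.proj Cv1 Xv1ᶜ ∧
  Ψ2 ∈ S.proj Cv2 Xv2ᶜ ∧
  (∀ c ∈ (Cv1 ∪ Cv2)ᶜ ∩ S.Cin, Φ1 c + Φ2 c ≤ S.γ c) ∧
  (∀ c ∈ Cv1 ∩ S.Cin, Ψ c + Φ2 c ≤ S.γ c) ∧
  (∀ c ∈ Cv2 ∩ S.Cin, Ψ c + Φ1 c ≤ S.γ c) ∧
  (∀ c ∈ (Cv1 ∪ Cv2)ᶜ, Φ c = min (Φ1 c + Φ2 c) (S.γ c)) ∧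
  (∀ c ∈ Cv1, Ψ1 c = min (Ψ c + Φ2 c) (S.γ c)) ∧
  (∀ c ∈ Cv2, Ψ2 c = min (Ψ c + Φ1 c) (S.γ c))

end SepSystem

namespace SepSystem

variable {V C D : Type} [DecidableEq V] [DecidableEq C] [Fintype V] [Fintype C]

/-- The set of values `ν_v(τ)` over all assignments `τ : X_v → D` of shape `(Φ,Ψ)`,
where `ν_v(τ) = Σ_{x ∈ X_v} ν_x(τ(x))`. -/
def valSet (S : SepSystem V C D) (ν : V → D → ℝ) (Xv : Finset V) (Cv : Finset C)
    (Φ Ψ : C → ℕ) : Set ℝ :=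
  { r | ∃ τ : V → D, S.HasShape Xv Cv Φ Ψ τ ∧ r = ∑ x ∈ Xv, ν x (τ x) }

end SepSystem

/-!
Shape conditions and linking equations are constraint-wise and `cb^c` is additive over disjoint
variable sets. Hence an assignment of shape `(Φ,Ψ)` at `v` restricts to assignments of linked
shapes at `v1` and `v2` (for `Ψ1`, combine the restriction to `X_{v2}` with an assignment of `X̄_v`
realising `Ψ`), and conversely assignments of linked shapes at the children glue to one of shape
`(Φ,Ψ)`; per constraint this is arithmetic of truncated sums, via
`min (min a γ + min b γ) γ = min (a + b) γ`. As values add up too, each supremum bounds the other.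
-/

theorem Finset.sum_union_piecewise {ι α M : Type*} [DecidableEq ι] [AddCommMonoid M]
    {A B : Finset ι} (h : Disjoint A B) (f : ι → α → M) (τ₁ τ₂ : ι → α) :
    ∑ x ∈ A ∪ B, f x (A.piecewise τ₁ τ₂ x) = ∑ x ∈ A, f x (τ₁ x) + ∑ x ∈ B, f x (τ₂ x) := by
  rw [sum_union h]
  congr 1
  · exact sum_congr rfl fun x hx => by rw [piecewise_eq_of_mem _ _ _ hx]
  · exact sum_congr rfl fun x hx => by
      rw [piecewise_eq_of_notMem _ _ _ (disjoint_right.mp h hx)]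

theorem Nat.min_min_add_min (a b g : ℕ) : min (min a g + min b g) g = min (a + b) g := by
  omega

namespace SepSystem

section Constraintwise

variable {V C D : Type} (S : SepSystem V C D) {c : C}

/-- Conditions (S1), (S1*) at a constraint `c ∉ C_v`, where `k = cb^c(τ)` and `φ = Φ^c`. -/
def OutShape (c : C) (φ k : ℕ) : Prop :=
  φ = min k (S.γ c) ∧ (c ∈ S.Cin → k ≤ S.γ c)

/-- Conditions (S2∈), (S2≥) at a constraint `c ∈ C_v`, where `k = cb^c(τ)` and `ψ = Ψ^c`. -/
def InShape (c : C) (ψ k : ℕ) : Prop :=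
  (c ∈ S.Cin → ψ + k ∈ S.Γ c) ∧ (c ∈ S.Cge → S.γ c ≤ ψ + k)

variable {S}

theorem InShape.add_le {ψ k : ℕ} (h : S.InShape c ψ k) (hc : c ∈ S.Cin) : ψ + k ≤ S.γ c :=
  S.gammaMax c hc _ (h.1 hc)

theorem OutShape.mono {φ k k' : ℕ} (h : S.OutShape c φ k) (hk : k' ≤ k) :
    S.OutShape c (min k' (S.γ c)) k' :=
  ⟨rfl, fun hc => hk.trans (h.2 hc)⟩

theorem InShape.outShape_of_le {ψ k k' : ℕ} (h : S.InShape c ψ k) (hk : k' ≤ k) :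
    S.OutShape c (min k' (S.γ c)) k' :=
  ⟨rfl, fun hc => by have := h.add_le hc; omega⟩

theorem OutShape.add {φ₁ φ₂ k₁ k₂ : ℕ} (h₁ : S.OutShape c φ₁ k₁) (h₂ : S.OutShape c φ₂ k₂)
    (hle : c ∈ S.Cin → φ₁ + φ₂ ≤ S.γ c) :
    S.OutShape c (min (φ₁ + φ₂) (S.γ c)) (k₁ + k₂) := by
  obtain ⟨rfl, hk₁⟩ := h₁
  obtain ⟨rfl, hk₂⟩ := h₂
  refine ⟨Nat.min_min_add_min _ _ _, fun hc => ?_⟩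
  have := hle hc
  have := hk₁ hc
  have := hk₂ hc
  omega

theorem OutShape.split {φ k₁ k₂ : ℕ} (h : S.OutShape c φ (k₁ + k₂)) :
    (c ∈ S.Cin → min k₁ (S.γ c) + min k₂ (S.γ c) ≤ S.γ c) ∧
      φ = min (min k₁ (S.γ c) + min k₂ (S.γ c)) (S.γ c) :=
  ⟨fun hc => by have := h.2 hc; omega, h.1.trans (Nat.min_min_add_min _ _ _).symm⟩

theorem InShape.add {ψ ψ₁ φ₂ k₁ k₂ : ℕ} (h₁ : S.InShape c ψ₁ k₁) (h₂ : S.OutShape c φ₂ k₂)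
    (hle : c ∈ S.Cin → ψ + φ₂ ≤ S.γ c) (hψ₁ : ψ₁ = min (ψ + φ₂) (S.γ c)) :
    S.InShape c ψ (k₁ + k₂) := by
  obtain ⟨rfl, hk₂⟩ := h₂
  refine ⟨fun hc => ?_, fun hc => ?_⟩
  · have := hle hc
    have := hk₂ hc
    convert h₁.1 hc using 1
    omega
  · have := h₁.2 hc
    omega

theorem InShape.of_add {p k₁ k₂ : ℕ} (h : S.InShape c (min p (S.γ c)) (k₁ + k₂)) :
    S.InShape c (min (k₂ + p) (S.γ c)) k₁ := by
  refine ⟨fun hc => ?_, fun hc => ?_⟩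
  · have := h.add_le hc
    convert h.1 hc using 1
    omega
  · have := h.2 hc
    omega

end Constraintwise

section Gluing

variable {V C D : Type} (S : SepSystem V C D) {A B : Finset V} {CA CB : Finset C}

theorem hasShape_iff [DecidableEq C] [Fintype C] {Xv : Finset V} {Cv : Finset C} {Φ Ψ : C → ℕ}
    {τ : V → D} :
    S.HasShape Xv Cv Φ Ψ τ ↔
      (∀ c ∉ Cv, S.OutShape c (Φ c) (S.cb Xv τ c)) ∧
        ∀ c ∈ Cv, S.InShape c (Ψ c) (S.cb Xv τ c) := by
  simp only [HasShape, OutShape, InShape, mem_compl, mem_inter]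
  grind

theorem cdiv_of_mem [DecidableEq C] {C' : Finset C} {X' : Finset V} {τ : V → D} {c : C}
    (hc : c ∈ C') :
    S.cdiv C' X' τ c = min (S.cb X' τ c) (S.γ c) :=
  if_pos hc

theorem cb_union [DecidableEq V] (h : Disjoint A B) (τ : V → D) (c : C) :
    S.cb (A ∪ B) τ c = S.cb A τ c + S.cb B τ c :=
  sum_union h

theorem cb_union_piecewise [DecidableEq V] (h : Disjoint A B) (τ₁ τ₂ : V → D) (c : C) :
    S.cb (A ∪ B) (A.piecewise τ₁ τ₂) c = S.cb A τ₁ c + S.cb B τ₂ c :=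
  sum_union_piecewise h _ _ _

theorem cb_compl_piecewise [DecidableEq V] [Fintype V] (h : Disjoint A B) (τ σ : V → D) (c : C) :
    S.cb Aᶜ (B.piecewise τ σ) c = S.cb B τ c + S.cb (A ∪ B)ᶜ σ c := by
  have hA : Aᶜ = B ∪ (A ∪ B)ᶜ := by
    ext x
    have : x ∈ A → x ∉ B := fun hx => disjoint_left.mp h hx
    simp only [mem_compl, mem_union]
    tauto
  rw [hA]
  exact S.cb_union_piecewise (disjoint_compl_right.mono_left subset_union_right) _ _ _

variable {S} [DecidableEq V] [DecidableEq C] [Fintype V] [Fintype C]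

theorem hasShape_left_of_hasShape_union (hX : Disjoint A B) {Φ : C → ℕ} {τ σ : V → D}
    (h : S.HasShape (A ∪ B) (CA ∪ CB) Φ (S.cdiv (CA ∪ CB) (A ∪ B)ᶜ σ) τ) :
    S.HasShape A CA (S.cdiv CAᶜ A τ) (S.cdiv CA Aᶜ (B.piecewise τ σ)) τ := by
  rw [S.hasShape_iff] at h ⊢
  refine ⟨fun c hc => ?_, fun c hc => ?_⟩
  · rw [cdiv_of_mem S (mem_compl.2 hc)]
    by_cases hcB : c ∈ CB
    · exact (h.2 c (mem_union_right _ hcB)).outShape_of_le (by rw [S.cb_union hX]; omega)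
    · exact (h.1 c (by simp [hc, hcB])).mono (by rw [S.cb_union hX]; omega)
  · have hin := h.2 c (mem_union_left _ hc)
    rw [cdiv_of_mem S (mem_union_left _ hc), S.cb_union hX] at hin
    rw [cdiv_of_mem S hc, S.cb_compl_piecewise hX]
    exact hin.of_add

theorem hasShape_right_of_hasShape_union (hX : Disjoint A B) {Φ : C → ℕ} {τ σ : V → D}
    (h : S.HasShape (A ∪ B) (CA ∪ CB) Φ (S.cdiv (CA ∪ CB) (A ∪ B)ᶜ σ) τ) :
    S.HasShape B CB (S.cdiv CBᶜ B τ) (S.cdiv CB Bᶜ (A.piecewise τ σ)) τ :=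
  hasShape_left_of_hasShape_union hX.symm (by rwa [union_comm B, union_comm CB])

theorem linked_left_of_hasShape_union (hX : Disjoint A B) (hC : Disjoint CA CB) {Φ : C → ℕ}
    {τ σ : V → D} (h : S.HasShape (A ∪ B) (CA ∪ CB) Φ (S.cdiv (CA ∪ CB) (A ∪ B)ᶜ σ) τ) :
    (∀ c ∈ CA ∩ S.Cin, S.cdiv (CA ∪ CB) (A ∪ B)ᶜ σ c + S.cdiv CBᶜ B τ c ≤ S.γ c) ∧
      ∀ c ∈ CA, S.cdiv CA Aᶜ (B.piecewise τ σ) c =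
        min (S.cdiv (CA ∪ CB) (A ∪ B)ᶜ σ c + S.cdiv CBᶜ B τ c) (S.γ c) := by
  have hval : ∀ c ∈ CA, S.cdiv (CA ∪ CB) (A ∪ B)ᶜ σ c = min (S.cb (A ∪ B)ᶜ σ c) (S.γ c) ∧
      S.cdiv CBᶜ B τ c = min (S.cb B τ c) (S.γ c) := fun c hc =>
    ⟨cdiv_of_mem S (mem_union_left _ hc), cdiv_of_mem S (mem_compl.2 (disjoint_left.1 hC hc))⟩
  refine ⟨fun c hc => ?_, fun c hc => ?_⟩
  · obtain ⟨hcA, hcin⟩ := mem_inter.1 hc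
    have := (S.hasShape_iff.1 h).2 c (mem_union_left _ hcA) |>.add_le hcin
    rw [(hval c hcA).1, (hval c hcA).2]
    rw [(hval c hcA).1, S.cb_union hX] at this
    omega
  · rw [(hval c hc).1, (hval c hc).2, cdiv_of_mem S hc, S.cb_compl_piecewise hX,
      Nat.min_min_add_min, add_comm]

theorem linked_of_hasShape_union (hX : Disjoint A B) (hC : Disjoint CA CB) {Φ : C → ℕ}
    {τ σ : V → D} (hΦ : Φ ∈ S.proj (CA ∪ CB)ᶜ (A ∪ B))
    (h : S.HasShape (A ∪ B) (CA ∪ CB) Φ (S.cdiv (CA ∪ CB) (A ∪ B)ᶜ σ) τ) :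
    S.Linked A B CA CB Φ (S.cdiv (CA ∪ CB) (A ∪ B)ᶜ σ)
      (S.cdiv CAᶜ A τ) (S.cdiv CA Aᶜ (B.piecewise τ σ))
      (S.cdiv CBᶜ B τ) (S.cdiv CB Bᶜ (A.piecewise τ σ)) := by
  have hswap : S.HasShape (B ∪ A) (CB ∪ CA) Φ (S.cdiv (CB ∪ CA) (B ∪ A)ᶜ σ) τ := by
    rwa [union_comm B, union_comm CB]
  obtain ⟨hA_le, hA_eq⟩ := linked_left_of_hasShape_union hX hC h
  obtain ⟨hB_le, hB_eq⟩ := linked_left_of_hasShape_union hX.symm hC.symm hswap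
  rw [union_comm B, union_comm CB] at hB_le hB_eq
  have hout : ∀ c ∉ CA ∪ CB, S.OutShape c (Φ c) (S.cb A τ c + S.cb B τ c) := fun c hc => by
    rw [← S.cb_union hX]
    exact (S.hasShape_iff.1 h).1 c hc
  have hΦ₁₂ : ∀ c ∉ CA ∪ CB,
      S.cdiv CAᶜ A τ c = min (S.cb A τ c) (S.γ c) ∧ S.cdiv CBᶜ B τ c = min (S.cb B τ c) (S.γ c) :=
    fun c hc => by
      obtain ⟨hcA, hcB⟩ : c ∉ CA ∧ c ∉ CB := by simpa using hc
      exact ⟨cdiv_of_mem S (mem_compl.2 hcA), cdiv_of_mem S (mem_compl.2 hcB)⟩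
  refine ⟨⟨σ, rfl⟩, ⟨τ, rfl⟩, ⟨τ, rfl⟩, hΦ, ⟨_, rfl⟩, ⟨_, rfl⟩,
    fun c hc => ?_, hA_le, hB_le, fun c hc => ?_, hA_eq, hB_eq⟩
  · obtain ⟨hc, hcin⟩ := mem_inter.1 hc
    rw [(hΦ₁₂ c (mem_compl.1 hc)).1, (hΦ₁₂ c (mem_compl.1 hc)).2]
    exact (hout c (mem_compl.1 hc)).split.1 hcin
  · rw [(hΦ₁₂ c (mem_compl.1 hc)).1, (hΦ₁₂ c (mem_compl.1 hc)).2]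
    exact (hout c (mem_compl.1 hc)).split.2

theorem hasShape_piecewise_of_linked (hX : Disjoint A B) (hC : Disjoint CA CB)
    {Φ Ψ Φ₁ Ψ₁ Φ₂ Ψ₂ : C → ℕ} {τ₁ τ₂ : V → D} (hL : S.Linked A B CA CB Φ Ψ Φ₁ Ψ₁ Φ₂ Ψ₂)
    (h₁ : S.HasShape A CA Φ₁ Ψ₁ τ₁) (h₂ : S.HasShape B CB Φ₂ Ψ₂ τ₂) :
    S.HasShape (A ∪ B) (CA ∪ CB) Φ Ψ (A.piecewise τ₁ τ₂) := by
  obtain ⟨-, -, -, -, -, -, hle, hA_le, hB_le, hΦ, hΨ₁, hΨ₂⟩ := hL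
  rw [S.hasShape_iff] at h₁ h₂ ⊢
  simp only [S.cb_union_piecewise hX]
  refine ⟨fun c hc => ?_, fun c hc => ?_⟩
  · obtain ⟨hcA, hcB⟩ : c ∉ CA ∧ c ∉ CB := by simpa using hc
    rw [hΦ c (mem_compl.2 hc)]
    exact (h₁.1 c hcA).add (h₂.1 c hcB) fun hcin => hle c (mem_inter.2 ⟨mem_compl.2 hc, hcin⟩)
  · rcases mem_union.1 hc with hcA | hcB
    · exact (h₁.2 c hcA).add (h₂.1 c (disjoint_left.1 hC hcA))
        (fun hcin => hA_le c (mem_inter.2 ⟨hcA, hcin⟩)) (hΨ₁ c hcA)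
    · rw [add_comm]
      exact (h₂.2 c hcB).add (h₁.1 c (disjoint_right.1 hC hcB))
        (fun hcin => hB_le c (mem_inter.2 ⟨hcB, hcin⟩)) (hΨ₂ c hcB)

end Gluing

section Values

variable {V C D : Type} [DecidableEq C] [Fintype C] [Finite V] [Finite D] (S : SepSystem V C D)
  (ν : V → D → ℝ) {Xv : Finset V} {Cv : Finset C} {Φ Ψ : C → ℕ} {τ : V → D}

theorem valSet_finite : (S.valSet ν Xv Cv Φ Ψ).Finite :=
  (Set.finite_range fun τ : V → D => ∑ x ∈ Xv, ν x (τ x)).subset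
    (by rintro r ⟨τ, -, rfl⟩; exact ⟨τ, rfl⟩)

theorem le_sSup_valSet (h : S.HasShape Xv Cv Φ Ψ τ) :
    ∑ x ∈ Xv, ν x (τ x) ≤ sSup (S.valSet ν Xv Cv Φ Ψ) :=
  le_csSup (S.valSet_finite ν).bddAbove ⟨τ, h, rfl⟩

theorem exists_hasShape_sSup_valSet_eq (h : S.HasShape Xv Cv Φ Ψ τ) :
    ∃ σ, S.HasShape Xv Cv Φ Ψ σ ∧ sSup (S.valSet ν Xv Cv Φ Ψ) = ∑ x ∈ Xv, ν x (σ x) :=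
  Set.Nonempty.csSup_mem (s := S.valSet ν Xv Cv Φ Ψ) ⟨_, τ, h, rfl⟩ (S.valSet_finite ν)

end Values

end SepSystem

theorem SepSystem.shape_max_value_general {V C D : Type} [DecidableEq V] [DecidableEq C]
    [Fintype V] [Fintype C] [Fintype D] (S : SepSystem V C D)
    (ν : V → D → ℝ)
    (Xv1 Xv2 : Finset V) (Cv1 Cv2 : Finset C)
    (hX : Disjoint Xv1 Xv2) (hC : Disjoint Cv1 Cv2)
    (Φ Ψ : C → ℕ)
    (hΦ : Φ ∈ S.proj (Cv1 ∪ Cv2)ᶜ (Xv1 ∪ Xv2))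
    (hΨ : Ψ ∈ S.proj (Cv1 ∪ Cv2) (Xv1 ∪ Xv2)ᶜ) :
    sSup (S.valSet ν (Xv1 ∪ Xv2) (Cv1 ∪ Cv2) Φ Ψ) =
      sSup { r : ℝ | ∃ Φ1 Ψ1 Φ2 Ψ2 : C → ℕ,
        S.Linked Xv1 Xv2 Cv1 Cv2 Φ Ψ Φ1 Ψ1 Φ2 Ψ2 ∧
        (∃ τ1 : V → D, S.HasShape Xv1 Cv1 Φ1 Ψ1 τ1) ∧
        (∃ τ2 : V → D, S.HasShape Xv2 Cv2 Φ2 Ψ2 τ2) ∧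
        r = sSup (S.valSet ν Xv1 Cv1 Φ1 Ψ1) + sSup (S.valSet ν Xv2 Cv2 Φ2 Ψ2) } := by
  obtain ⟨σ, rfl⟩ := hΨ
  apply csSup_eq_csSup_of_forall_exists_le
  · rintro _ ⟨τ, hτ, rfl⟩
    have h₁ := hasShape_left_of_hasShape_union hX hτ
    have h₂ := hasShape_right_of_hasShape_union hX hτ
    refine ⟨_, ⟨_, _, _, _, linked_of_hasShape_union hX hC hΦ hτ, ⟨τ, h₁⟩, ⟨τ, h₂⟩, rfl⟩, ?_⟩
    rw [sum_union hX]
    exact add_le_add (S.le_sSup_valSet ν h₁) (S.le_sSup_valSet ν h₂)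
  · rintro _ ⟨Φ₁, Ψ₁, Φ₂, Ψ₂, hL, ⟨τ₁, h₁⟩, ⟨τ₂, h₂⟩, rfl⟩
    obtain ⟨ρ₁, hρ₁, hmax₁⟩ := S.exists_hasShape_sSup_valSet_eq ν h₁
    obtain ⟨ρ₂, hρ₂, hmax₂⟩ := S.exists_hasShape_sSup_valSet_eq ν h₂
    refine ⟨_, ⟨Xv1.piecewise ρ₁ ρ₂, hasShape_piecewise_of_linked hX hC hL hρ₁ hρ₂,
      rfl⟩, ?_⟩
    rw [hmax₁, hmax₂, sum_union_piecewise hX]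

/-- Optimization version of the decomposition proposition: for an inner vertex `v`
with children `v1`, `v2` and a shape `(Φ,Ψ)` for `v` with `X̂_v(Φ,Ψ) ≠ ∅`, the maximal
value of an assignment of shape `(Φ,Ψ)` equals the maximum, over all pairs of shapes
for the children that are linked with `(Φ,Ψ)` and have nonempty sets of assignments, of
the sum of the two corresponding maximal values. -/
theorem SepSystem.shape_max_value {V C D : Type} [DecidableEq V] [DecidableEq C]
    [Fintype V] [Fintype C] [Fintype D] (S : SepSystem V C D)
    (ν : V → D → ℝ)
    (Xv1 Xv2 : Finset V) (Cv1 Cv2 : Finset C)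
    (hX : Disjoint Xv1 Xv2) (hC : Disjoint Cv1 Cv2)
    (Φ Ψ : C → ℕ)
    (hΦ : Φ ∈ S.proj (Cv1 ∪ Cv2)ᶜ (Xv1 ∪ Xv2))
    (hΨ : Ψ ∈ S.proj (Cv1 ∪ Cv2) (Xv1 ∪ Xv2)ᶜ)
    (hne : ∃ τ : V → D, S.HasShape (Xv1 ∪ Xv2) (Cv1 ∪ Cv2) Φ Ψ τ) :
    sSup (S.valSet ν (Xv1 ∪ Xv2) (Cv1 ∪ Cv2) Φ Ψ) =
      sSup { r : ℝ | ∃ Φ1 Ψ1 Φ2 Ψ2 : C → ℕ,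
        S.Linked Xv1 Xv2 Cv1 Cv2 Φ Ψ Φ1 Ψ1 Φ2 Ψ2 ∧
        (∃ τ1 : V → D, S.HasShape Xv1 Cv1 Φ1 Ψ1 τ1) ∧
        (∃ τ2 : V → D, S.HasShape Xv2 Cv2 Φ2 Ψ2 τ2) ∧
        r = sSup (S.valSet ν Xv1 Cv1 Φ1 Ψ1) + sSup (S.valSet ν Xv2 Cv2 Φ2 Ψ2) } :=
  SepSystem.shape_max_value_general S ν Xv1 Xv2 Cv1 Cv2 hX hC Φ Ψ hΦ hΨ
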